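/- Let D = (V,E) be a finite directed graph with n = |V| vertices. A subset S ⊆ V is a feedback vertex set of D if and only if there exists a function ℓ : V → {0,1,...,n-1} such that for every edge (u,v) ∈ E, ℓ(v) ≥ ℓ(u) + 1 - n·[u ∈ S] - n·[v ∈ S], where [·] is the 0/1 indicator. -/

import Mathlib

/-- A directed cycle in a digraph given by edge relation `E`: a nonempty list
`v :: rest` such that consecutive vertices are joined by edges and the last
vertex has an edge back to `v`. -/
def IsCycle {V : Type*} (E : V → V → Prop) : List V → Prop
  | [] => False
  | v :: rest => List.Chain E v (rest ++ [v])

/-- `S` is a feedback vertex set: it contains at least one vertex of every directed cycle. -/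
def IsFVS {V : Type*} (E : V → V → Prop) (S : Set V) : Prop :=
  ∀ l, IsCycle E l → ∃ x ∈ l, x ∈ S

/-- A digraph is acyclic if it has no directed cycle. -/
def IsAcyclicDigraph {V : Type*} (E : V → V → Prop) : Prop :=
  ∀ l, ¬ IsCycle E l

/-!
`S` is a feedback vertex set iff the digraph `D - S` is acyclic, and a finite digraph is
acyclic iff its vertices can be numbered by `0, …, n - 1` increasingly along every edge (number
each vertex by how many vertices reach it). The ILP constraint encodes exactly this: an edge with
an endpoint in `S` is unconstrained since `ℓ u + 1 - n ≤ 0`, while an edge of `D - S` forces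
`ℓ u < ℓ v`.
-/

open Relation

theorem Relation.transGen_iff_exists_isChain {α : Type*} {R : α → α → Prop} {a b : α} :
    TransGen R a b ↔ ∃ l, List.IsChain R (a :: l ++ [b]) := by
  constructor
  · intro h
    induction h with
    | single h => exact ⟨[], .cons_cons h (.singleton _)⟩
    | @tail b c _ hbc ih =>
      obtain ⟨l, hl⟩ := ih
      refine ⟨l ++ [b], ?_⟩
      simpa using hl.append_overlap (.cons_cons hbc (.singleton c)) (List.cons_ne_nil _ _)
  · rintro ⟨l, hl⟩
    induction l generalizing a with
    | nil => exact .single (List.isChain_pair.mp hl)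
    | cons c l ih =>
      rw [List.cons_append, List.cons_append, List.isChain_cons_cons] at hl
      exact .head hl.1 (ih hl.2)

theorem List.IsChain.forall_mem_of_rel {α : Type*} {R : α → α → Prop} {p : α → Prop}
    (hR : ∀ ⦃a b⦄, R a b → p b) {a : α} {l : List α} (h : List.IsChain R (a :: l)) :
    ∀ x ∈ l, p x := by
  cases l with
  | nil => simp
  | cons b l =>
    exact h.tail.induction p _ (fun _ _ hxy _ => hR hxy)
      fun _ => hR (List.isChain_cons_cons.mp h).1

section Digraph

variable {V : Type*}

theorem isAcyclicDigraph_iff_forall_not_transGen (R : V → V → Prop) :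
    IsAcyclicDigraph R ↔ ∀ v, ¬ TransGen R v v := by
  constructor
  · rintro h v hv
    obtain ⟨l, hl⟩ := transGen_iff_exists_isChain.mp hv
    exact h (v :: l) hl
  · rintro h (_ | ⟨v, l⟩) hl
    · exact hl.elim
    · exact h v (transGen_iff_exists_isChain.mpr ⟨l, hl⟩)

def removeVertices (E : V → V → Prop) (S : Set V) : V → V → Prop :=
  fun u v => E u v ∧ u ∉ S ∧ v ∉ S

theorem isFVS_iff_isAcyclicDigraph_removeVertices (E : V → V → Prop) (S : Set V) :
    IsFVS E S ↔ IsAcyclicDigraph (removeVertices E S) := by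
  constructor
  · rintro h (_ | ⟨v, l⟩) hl
    · exact hl.elim
    · obtain ⟨x, hx, hxS⟩ := h (v :: l) (List.IsChain.imp (fun _ _ h => h.1) hl)
      have hlS : ∀ y ∈ l ++ [v], y ∉ S := List.IsChain.forall_mem_of_rel (fun _ _ h => h.2.2) hl
      refine hlS x ?_ hxS
      simp only [List.mem_cons] at hx
      simp only [List.mem_append, List.mem_singleton]
      tauto
  · rintro h (_ | ⟨v, l⟩) hl
    · exact hl.elim
    · by_contra! hS
      have hS' : ∀ y ∈ v :: l ++ [v], y ∉ S := by
        simp only [List.mem_cons, List.mem_append] at hS ⊢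
        grind
      exact h (v :: l) (List.IsChain.imp_of_mem_imp
        (fun a b ha hb hab => ⟨hab, hS' a ha, hS' b hb⟩) hl)

theorem lt_of_transGen_of_forall_lt {ℓ : V → ℕ} {R : V → V → Prop}
    (hℓ : ∀ u v, R u v → ℓ u < ℓ v) {u v : V} (h : TransGen R u v) : ℓ u < ℓ v := by
  induction h with
  | single h => exact hℓ _ _ h
  | tail _ h ih => exact ih.trans (hℓ _ _ h)

theorem isAcyclicDigraph_iff_exists_rank [Fintype V] (R : V → V → Prop) :
    IsAcyclicDigraph R ↔
      ∃ ℓ : V → ℕ, (∀ v, ℓ v < Fintype.card V) ∧ ∀ u v, R u v → ℓ u < ℓ v := by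
  classical
  rw [isAcyclicDigraph_iff_forall_not_transGen]
  constructor
  · intro hR
    let pred : V → Finset V := fun v => {w | TransGen R w v}
    have not_mem_pred : ∀ v, v ∉ pred v := by simpa [pred] using hR
    refine ⟨fun v => (pred v).card, fun v => ?_, fun u v huv => ?_⟩
    · exact Finset.card_lt_univ_of_notMem (not_mem_pred v)
    · refine Finset.card_lt_card <|
        (Finset.ssubset_iff_of_subset ?_).mpr ⟨u, ?_, not_mem_pred u⟩
      · intro w hw
        simp only [pred, Finset.mem_filter, Finset.mem_univ, true_and] at hw ⊢
        exact hw.tail huv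
      · simpa [pred] using TransGen.single huv
  · rintro ⟨ℓ, -, hℓ⟩ v hv
    exact (lt_of_transGen_of_forall_lt hℓ hv).false

end Digraph

theorem ilp_edge_constraint_iff {n a b : ℕ} {p q : Prop} [Decidable p] [Decidable q] (ha : a < n) :
    (a : ℤ) + 1 - n * (if p then 1 else 0) - n * (if q then 1 else 0) ≤ b ↔
      (¬p → ¬q → a < b) := by
  by_cases hp : p <;> by_cases hq : q <;> simp [hp, hq] <;> omega

/-- correctness of the polynomial-size ILP formulation of DFVS. -/
theorem stmt_6 {V : Type*} [Fintype V] [DecidableEq V] (E : V → V → Prop)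
    (S : Finset V) :
    IsFVS E ↑S ↔
      ∃ ℓ : V → ℕ, (∀ v, ℓ v ≤ Fintype.card V - 1) ∧
        ∀ u v, E u v →
          (ℓ u : ℤ) + 1 - (Fintype.card V) * (if u ∈ S then 1 else 0)
            - (Fintype.card V) * (if v ∈ S then 1 else 0) ≤ (ℓ v : ℤ) := by
  rw [isFVS_iff_isAcyclicDigraph_removeVertices, isAcyclicDigraph_iff_exists_rank]
  have hcard : ∀ ℓ : V → ℕ, (∀ v, ℓ v ≤ Fintype.card V - 1) ↔ ∀ v, ℓ v < Fintype.card V :=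
    fun ℓ => forall_congr' fun v => by have := Fintype.card_pos_iff.mpr ⟨v⟩; omega
  refine exists_congr fun ℓ => ?_
  rw [hcard ℓ]
  refine and_congr_right fun hℓ => forall₂_congr fun u v => ?_
  rw [ilp_edge_constraint_iff (hℓ u)]
  simp only [removeVertices, Finset.mem_coe]
  tauto
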